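/- Let λ > 1 be a real number, let R be a positive integer with λ < 2^R, let Ω ≥ 0, and set Δ = Ω / (1 - λ·2^{-R}). Then there exists a function g : ℝ → ℝ whose range contains at most 2^R distinct values, such that for every disturbance sequence w : ℕ → ℝ with |w_t| ≤ Ω/2 for all t, the closed-loop trajectory defined by x_0 = 0 and x_{t+1} = λ·x_t + g(x_t) + w_t satisfies |x_t| ≤ Δ/2 for all t ∈ ℕ. -/

import Mathlib

/-!
Quantize the state with the uniform `2^R`-level quantizer `Q` of the window `[-Δ/2, Δ/2]` and
apply the control `g x = -λ Q(x)`. Then `x_{t+1} = λ (x_t - Q x_t) + w_t`, and while `x_t` stays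
in the window the quantization error is at most half a cell, `Δ / 2^{R+1}`, so
`|x_{t+1}| ≤ λ Δ / 2^{R+1} + Ω / 2 = Δ / 2`: the width `Δ` is exactly the fixed point of
`Δ = λ 2^{-R} Δ + Ω`.
-/

open Finset

/-- The cell of `x` when `[a, a + N δ]` is cut into `N` cells of width `δ`; the clamp puts the
right endpoint into the last cell. -/
noncomputable def quantCell (a δ : ℝ) (N : ℕ) (x : ℝ) : ℕ :=
  min (N - 1) ⌊(x - a) / δ⌋₊

noncomputable def uniformQuantizer (a δ : ℝ) (N : ℕ) (x : ℝ) : ℝ :=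
  a + δ * (quantCell a δ N x + 1 / 2)

lemma quantCell_lt {N : ℕ} (hN : 0 < N) (a δ x : ℝ) : quantCell a δ N x < N := by
  unfold quantCell
  omega

lemma quantCell_mem_cell {a δ x : ℝ} {N : ℕ} (hδ : 0 < δ) (hN : 0 < N)
    (hx : x ∈ Set.Icc a (a + N * δ)) :
    quantCell a δ N x * δ ≤ x - a ∧ x - a ≤ (quantCell a δ N x + 1) * δ := by
  obtain ⟨hax, hxb⟩ := hx
  set k := ⌊(x - a) / δ⌋₊
  have hk_le : k * δ ≤ x - a :=
    (le_div_iff₀ hδ).mp (Nat.floor_le (div_nonneg (sub_nonneg.mpr hax) hδ.le))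
  have hk_lt : x - a < (k + 1) * δ := (div_lt_iff₀ hδ).mp (Nat.lt_floor_add_one _)
  unfold quantCell
  rcases le_or_gt k (N - 1) with hkN | hkN
  · rw [min_eq_right hkN]
    exact ⟨hk_le, hk_lt.le⟩
  · rw [min_eq_left hkN.le, Nat.cast_sub hN, Nat.cast_one]
    have hNk : (N : ℝ) ≤ k := by exact_mod_cast (by omega : N ≤ k)
    have : (N : ℝ) * δ ≤ k * δ := mul_le_mul_of_nonneg_right hNk hδ.le
    constructor <;> nlinarith

lemma abs_sub_uniformQuantizer_le {a δ x : ℝ} {N : ℕ} (hN : 0 < N)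
    (hx : x ∈ Set.Icc a (a + N * δ)) : |x - uniformQuantizer a δ N x| ≤ δ / 2 := by
  have hδ : 0 ≤ δ := by
    have hNδ : 0 ≤ (N : ℝ) * δ := by linarith [hx.1, hx.2]
    exact nonneg_of_mul_nonneg_right hNδ (by exact_mod_cast hN)
  rcases hδ.eq_or_lt with rfl | hδ
  · have : x = a := by linarith [hx.1, hx.2]
    simp [uniformQuantizer, this]
  · obtain ⟨hlo, hhi⟩ := quantCell_mem_cell hδ hN hx
    rw [uniformQuantizer, abs_le]
    constructor <;> linarith

lemma exists_finset_card_le_of_comp {α β : Type*} [DecidableEq β] {N : ℕ} (i : α → ℕ)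
    (hi : ∀ x, i x < N) (f : ℕ → β) : ∃ s : Finset β, #s ≤ N ∧ ∀ x, f (i x) ∈ s :=
  ⟨(range N).image f, card_image_le.trans (card_range N).le,
    fun x => mem_image_of_mem f (mem_range.mpr (hi x))⟩

lemma abs_mul_add_le {lam e w δ Ω : ℝ} (hlam : 0 ≤ lam) (he : |e| ≤ δ / 2)
    (hw : |w| ≤ Ω / 2) : |lam * e + w| ≤ (lam * δ + Ω) / 2 :=
  calc |lam * e + w| ≤ |lam * e| + |w| := abs_add_le _ _
    _ = lam * |e| + |w| := by rw [abs_mul, abs_of_nonneg hlam]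
    _ ≤ lam * (δ / 2) + Ω / 2 := by gcongr
    _ = (lam * δ + Ω) / 2 := by ring

theorem virtual_controlled_process (lam : ℝ) (hlam : 1 < lam) (R : ℕ)
    (hlt : lam < 2 ^ R) (Ω : ℝ) :
    ∃ g : ℝ → ℝ, (∃ s : Finset ℝ, s.card ≤ 2 ^ R ∧ ∀ x, g x ∈ s) ∧
      ∀ w : ℕ → ℝ, (∀ t, |w t| ≤ Ω / 2) →
        ∀ x : ℕ → ℝ, x 0 = 0 → (∀ t, x (t + 1) = lam * x t + g (x t) + w t) →
          ∀ t, |x t| ≤ (Ω / (1 - lam * 2 ^ (-(R : ℤ)))) / 2 := by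
  set Δ := Ω / (1 - lam * 2 ^ (-(R : ℤ)))
  set δ := Δ / 2 ^ R
  have hN : 0 < 2 ^ R := Nat.two_pow_pos R
  have hden : 0 < 1 - lam * 2 ^ (-(R : ℤ)) := by
    rw [zpow_neg, zpow_natCast, sub_pos, mul_inv_lt_iff₀ (by positivity)]
    linarith
  have hwindow : -(Δ / 2) + (2 ^ R : ℕ) * δ = Δ / 2 := by
    push_cast
    simp only [δ]
    field_simp
    ring
  have hwidth : lam * δ + Ω = Δ := by
    have hfix : Δ * (1 - lam * 2 ^ (-(R : ℤ))) = Ω := div_mul_cancel₀ _ hden.ne'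
    rw [zpow_neg, zpow_natCast] at hfix
    linear_combination -hfix
  set Q := uniformQuantizer (-(Δ / 2)) δ (2 ^ R)
  refine ⟨fun y => -lam * Q y, exists_finset_card_le_of_comp _ (quantCell_lt hN _ _)
    fun k => -lam * (-(Δ / 2) + δ * (k + 1 / 2)), ?_⟩
  intro w hw x hx0 hstep t
  induction t with
  | zero =>
    have hΩ : 0 ≤ Ω := by linarith [abs_nonneg (w 0), hw 0]
    rw [hx0, abs_zero]
    exact div_nonneg (div_nonneg hΩ hden.le) zero_le_two
  | succ t ih =>
    have herr : |x t - Q (x t)| ≤ δ / 2 :=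
      abs_sub_uniformQuantizer_le hN (by rw [hwindow]; exact abs_le.mp ih)
    calc |x (t + 1)| = |lam * (x t - Q (x t)) + w t| := by rw [hstep t]; ring_nf
      _ ≤ (lam * δ + Ω) / 2 := abs_mul_add_le (by linarith) herr (hw t)
      _ = Δ / 2 := by rw [hwidth]
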